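/- With notation as above, let g be the Riemannian metric on ℝ^{n+1} ∖ ℝ^{k−1} given by g(x)(u₁, u₂) = ‖x^⊥‖^{−2} ⟨u₁, u₂⟩, where ⟨·,·⟩ is the Euclidean inner product. Let x₀ ∈ ℝ^{k−1}, r > 0, and let I(x) = x₀ + r²(x − x₀)/‖x − x₀‖² be the inversion in the sphere S(x₀; r). Then I is an isometry of (ℝ^{n+1} ∖ ℝ^{k−1}, g): for every x ∈ ℝ^{n+1} ∖ ℝ^{k−1} and all u₁, u₂ ∈ ℝ^{n+1}, g(I(x))(dI_x(u₁), dI_x(u₂)) = g(x)(u₁, u₂). -/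

import Mathlib

/-!
The map `I` is the Euclidean inversion `EuclideanGeometry.inversion x₀ r`. Its derivative at `x`
is `s` times a reflection, where `s = (r / ‖x - x₀‖) ^ 2`, so it multiplies inner products by
`s ^ 2`. Since the center lies in `ℝ^{k-1}` and `x ↦ x^⊥` is linear, `(I x)^⊥ = s • x^⊥`, so the
conformal factor `‖x^⊥‖⁻²` is divided by the same `s ^ 2`.
-/

open scoped RealInnerProductSpace

/-- The component of `x` in `ℝ^{n-k+2} = (ℝ^{k-1})^⊥`. -/
def perpPart (n k : ℕ) (x : EuclideanSpace ℝ (Fin (n + 1))) :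
    EuclideanSpace ℝ (Fin (n + 1)) :=
  WithLp.toLp 2 (fun i : Fin (n + 1) => if (i : ℕ) < k - 1 then 0 else x i)

open EuclideanGeometry

def perpPartₗ (n k : ℕ) :
    EuclideanSpace ℝ (Fin (n + 1)) →ₗ[ℝ] EuclideanSpace ℝ (Fin (n + 1)) where
  toFun := perpPart n k
  map_add' x y := by
    ext i
    simp only [perpPart, PiLp.add_apply, PiLp.toLp_apply]
    split_ifs <;> simp
  map_smul' c x := by
    ext i
    simp only [perpPart, PiLp.smul_apply, smul_eq_mul, PiLp.toLp_apply, RingHom.id_apply]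
    split_ifs <;> simp

section Inversion

variable {E F : Type*} [NormedAddCommGroup E] [InnerProductSpace ℝ E]

theorem map_inversion_of_map_center_eq_zero [AddCommGroup F] [Module ℝ F]
    (P : E →ₗ[ℝ] F) {c : E} (hc : P c = 0) (R : ℝ) (x : E) :
    P (inversion c R x) = (R / dist x c) ^ 2 • P x := by
  rw [inversion, vsub_eq_sub, vadd_eq_add, map_add, map_smul, map_sub, hc, sub_zero, add_zero]

theorem inner_fderiv_inversion {c x : E} (R : ℝ) (hx : x ≠ c) (u v : E) :
    ⟪fderiv ℝ (inversion c R) x u, fderiv ℝ (inversion c R) x v⟫ =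
      ((R / dist x c) ^ 2) ^ 2 * ⟪u, v⟫ := by
  rw [(hasFDerivAt_inversion hx).fderiv]
  simp only [smul_apply, real_inner_smul_left, real_inner_smul_right,
    ContinuousLinearEquiv.coe_coe, LinearIsometryEquiv.coe_toContinuousLinearEquiv,
    LinearIsometryEquiv.inner_map_map]
  ring

end Inversion

theorem stmt13 {n k : ℕ}
    (x₀ : EuclideanSpace ℝ (Fin (n + 1))) (hx₀ : perpPart n k x₀ = 0)
    (r : ℝ) (hr : 0 < r)
    (I : EuclideanSpace ℝ (Fin (n + 1)) → EuclideanSpace ℝ (Fin (n + 1)))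
    (hI : ∀ x, I x = x₀ + (r ^ 2 / ‖x - x₀‖ ^ 2) • (x - x₀)) :
    ∀ x : EuclideanSpace ℝ (Fin (n + 1)), perpPart n k x ≠ 0 →
      ∀ u₁ u₂ : EuclideanSpace ℝ (Fin (n + 1)),
        (‖perpPart n k (I x)‖ ^ 2)⁻¹ * ⟪fderiv ℝ I x u₁, fderiv ℝ I x u₂⟫ =
          (‖perpPart n k x‖ ^ 2)⁻¹ * ⟪u₁, u₂⟫ := by
  intro x hx u₁ u₂
  obtain rfl : I = inversion x₀ r := funext fun y => by
    rw [hI, inversion, vsub_eq_sub, vadd_eq_add, dist_eq_norm, div_pow]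
    exact add_comm _ _
  have hxx₀ : x ≠ x₀ := by
    rintro rfl
    exact hx hx₀
  have hd : dist x x₀ ≠ 0 := dist_ne_zero.2 hxx₀
  have hperp : perpPart n k (inversion x₀ r x) = (r / dist x x₀) ^ 2 • perpPart n k x :=
    map_inversion_of_map_center_eq_zero (perpPartₗ n k) hx₀ r x
  rw [inner_fderiv_inversion r hxx₀, hperp, norm_smul, mul_pow, Real.norm_eq_abs, sq_abs]
  field_simp
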